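/- Let α = (σ̂ ‖ τ̂) be an n-simplex of χ²(Δⁿ), where σ̂ = (A_1|…|A_k) and τ̂ = (B_1|…|B_m) are ordered set partitions of [n]. For x ∈ [n] with x ∈ B_l, the vertex of α colored x is internal if and only if A_k ∩ (B_1∪…∪B_l) ≠ ∅. In particular: all n+1 vertices of α are internal if and only if A_k ∩ B_1 ≠ ∅; and if A_k ∩ B_1 = ∅ and q is the largest index such that A_k ∩ B_i = ∅ for all 1 ≤ i ≤ q, then the boundary (non-internal) vertices of α are precisely those colored by elements of B_1∪…∪B_q. -/

import Mathlib

open Finset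

/-- union of a list of finsets -/
def lunion {α : Type*} [DecidableEq α] (L : List (Finset α)) : Finset α := L.foldr (· ∪ ·) ∅

/-- `IsOSP A L` : `L` is an ordered set partition of the finite set `A`. -/
def IsOSP {α : Type*} [DecidableEq α] (A : Finset α) (L : List (Finset α)) : Prop :=
  (∀ B ∈ L, B.Nonempty) ∧ L.Pairwise (fun B C => Disjoint B C) ∧ lunion L = A

/-- `seenBlk L x` = `A_1 ∪ … ∪ A_{i(x)}`, the union of the blocks of `L` up to and
including the block containing `x`. -/
def seenBlk {α : Type*} [DecidableEq α] : List (Finset α) → α → Finset α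
  | [], _ => ∅
  | A :: rest, x => if x ∈ A then A else A ∪ seenBlk rest x

/-- rank (1-based position in the increasing order) of `x` in the finset `S`. -/
def rankIn (S : Finset ℕ) (x : ℕ) : ℕ := (S.filter (fun y => y ≤ x)).card

/-- the set `F(σ)` of flippable colors, for an ordered set partition of `[n] = {0,…,n}` -/
def Fset (n : ℕ) (L : List (Finset ℕ)) : Finset ℕ :=
  match L.getLast? with
  | some A => if A.card = 1 then Finset.range (n+1) \ A else Finset.range (n+1)
  | none => Finset.range (n+1)

/-- the flip `F(σ,x)` of an ordered set partition with respect to the color `x` -/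
def flipOSP (x : ℕ) : List (Finset ℕ) → List (Finset ℕ)
  | [] => []
  | A :: rest =>
    if x ∈ A then
      if 2 ≤ A.card then {x} :: A.erase x :: rest
      else
        match rest with
        | [] => [A]
        | B :: rest' => insert x B :: rest'
    else A :: flipOSP x rest

def levelAux : List ℕ → List (Finset ℕ) → Option ℕ
  | [], _ => none
  | _ :: _, [] => none
  | x :: xs, A :: As => if A = {x} then levelAux xs As else some x

/-- `levelFn Σ σ` = `level(σ,Σ)` (as an `Option`; `none` = undefined). -/
def levelFn (Sig : List ℕ) (L : List (Finset ℕ)) : Option ℕ :=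
  levelAux Sig.reverse L.reverse

/-- ordered set partitions of `[n] = {0,…,n}` -/
def OSPn (n : ℕ) : Type := {L : List (Finset ℕ) // IsOSP (Finset.range (n+1)) L}

/-- the graph `Γ_n`: vertices are the ordered set partitions of `[n]`, with `σ` and
`F(σ,x)` joined by an edge for every `x ∈ F(σ)`. -/
def Gamma (n : ℕ) : SimpleGraph (OSPn n) where
  Adj σ τ := σ ≠ τ ∧
    ((∃ x ∈ Fset n σ.1, τ.1 = flipOSP x σ.1) ∨ (∃ x ∈ Fset n τ.1, σ.1 = flipOSP x τ.1))
  symm := ⟨fun σ τ h => ⟨h.1.symm, h.2.symm⟩⟩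
  loopless := ⟨fun σ h => h.1 rfl⟩

/-- a matching: a set of edges of `G`, no two of which share a vertex -/
def IsMatchingSet {V : Type*} (G : SimpleGraph V) (M : Set (Sym2 V)) : Prop :=
  (∀ e ∈ M, e ∈ G.edgeSet) ∧ ∀ e ∈ M, ∀ f ∈ M, ∀ v : V, v ∈ e → v ∈ f → e = f

/-- a vertex is critical w.r.t. `M` if it lies in no edge of `M` -/
def CriticalVx {V : Type*} (M : Set (Sym2 V)) (v : V) : Prop := ∀ e ∈ M, v ∉ e

/-- the standard matching `M_Σ`, as a set of edges of `Γ_n` -/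
def MSigma (n : ℕ) (Sig : List ℕ) : Set (Sym2 (OSPn n)) :=
  {e | ∃ σ τ : OSPn n, ∃ x, levelFn Sig σ.1 = some x ∧ τ.1 = flipOSP x σ.1 ∧ e = s(σ, τ)}

/-- a list of edges is alternating w.r.t. `M` -/
def Alternates {V : Type*} (M : Set (Sym2 V)) (es : List (Sym2 V)) : Prop :=
  es.Chain' (fun e f => e ∈ M ↔ f ∉ M)

def IsProperlyAlternating {V : Type*} {G : SimpleGraph V} (M : Set (Sym2 V)) {u v : V}
    (p : G.Walk u v) : Prop :=
  Alternates M p.edges ∧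
  (∀ e, p.edges.head? = some e → e ∉ M → CriticalVx M u) ∧
  (∀ e, p.edges.getLast? = some e → e ∉ M → CriticalVx M v)

def IsSemiAugmenting {V : Type*} {G : SimpleGraph V} (M : Set (Sym2 V)) {u v : V}
    (p : G.Walk u v) : Prop :=
  IsProperlyAlternating M p ∧
  (∃ e, p.edges.head? = some e ∧ e ∈ M) ∧ (∃ e, p.edges.getLast? = some e ∧ e ∉ M)

def IsNonAugmenting {V : Type*} {G : SimpleGraph V} (M : Set (Sym2 V)) {u v : V}
    (p : G.Walk u v) : Prop :=
  Alternates M p.edges ∧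
  (∃ e, p.edges.head? = some e ∧ e ∈ M) ∧ (∃ e, p.edges.getLast? = some e ∧ e ∈ M)

def IsWeaklySemiAugmenting {V : Type*} {G : SimpleGraph V} (M : Set (Sym2 V)) {u v : V}
    (p : G.Walk u v) : Prop :=
  Alternates M p.edges ∧
  (p.edges = [] ∨
    ((∃ e, p.edges.head? = some e ∧ e ∈ M) ∧ (∃ e, p.edges.getLast? = some e ∧ e ∉ M)))

/-- a partial ordered set partition, as a list of pairs of blocks `(A_i, B_i)` -/
abbrev RawPOSP := List (Finset ℕ × Finset ℕ)

def carrierP (σ : RawPOSP) : Finset ℕ := (σ.map Prod.fst).foldr (· ∪ ·) ∅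
def colorsP (σ : RawPOSP) : Finset ℕ := (σ.map Prod.snd).foldr (· ∪ ·) ∅

/-- `σ` is a partial ordered set partition of `[n] = {0,…,n}` -/
def IsPOSP (n : ℕ) (σ : RawPOSP) : Prop :=
  σ ≠ [] ∧ (∀ p ∈ σ, p.2.Nonempty ∧ p.2 ⊆ p.1 ∧ p.1 ⊆ Finset.range (n+1)) ∧
  (σ.map Prod.fst).Pairwise (fun A B => Disjoint A B)

/-- view an ordered set partition as a partial one, with `B_i = A_i` -/
def toPairs (L : List (Finset ℕ)) : RawPOSP := L.map (fun A => (A, A))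

def dlAux (S : Finset ℕ) : Finset ℕ → RawPOSP → RawPOSP
  | _, [] => []
  | acc, (A, B) :: rest =>
    if B ⊆ S then dlAux S (acc ∪ A) rest
    else (acc ∪ A, B \ S) :: dlAux S ∅ rest

/-- the deletion `dl(σ, S)` -/
def dl (σ : RawPOSP) (S : Finset ℕ) : RawPOSP := dlAux S ∅ σ

/-- `D(σ, S)` = `A_i ∪ … ∪ A_t` for the minimal `i` with `B_i ∪ … ∪ B_t ⊆ S`, else `∅` -/
def Dfun (S : Finset ℕ) : RawPOSP → Finset ℕ
  | [] => ∅
  | b :: rest => if colorsP (b :: rest) ⊆ S then carrierP (b :: rest) else Dfun S rest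

def nodesAux : Finset ℕ → RawPOSP → Finset (Finset ℕ × ℕ)
  | _, [] => ∅
  | acc, (A, B) :: rest => B.image (fun x => (acc ∪ A, x)) ∪ nodesAux (acc ∪ A) rest

/-- the node set `V(σ)` of a partial ordered set partition -/
def nodesP (σ : RawPOSP) : Finset (Finset ℕ × ℕ) := nodesAux ∅ σ

/-- an ordered set partition of the whole of `[n]`, viewed as a partial one -/
def IsFullOSP (n : ℕ) (σ : RawPOSP) : Prop :=
  IsPOSP n σ ∧ carrierP σ = Finset.range (n+1) ∧ ∀ p ∈ σ, p.2 = p.1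

/-- simplices of the standard chromatic subdivision `χ(Δⁿ)` -/
def IsSimplexChi (n : ℕ) (W : Finset (Finset ℕ × ℕ)) : Prop :=
  ∃ σ : RawPOSP, IsFullOSP n σ ∧ W ⊆ nodesP σ

/-- a linked tuple of partial ordered set partitions -/
def Linked (T : List RawPOSP) : Prop := T.Chain' (fun σ τ => colorsP σ = carrierP τ)

/-- vertices of `χ^d(Δⁿ)`: linked `d`-tuples whose last entry has a singleton color set -/
def IsVertexChi (n d : ℕ) (v : List RawPOSP) : Prop :=
  v.length = d ∧ (∀ σ ∈ v, IsPOSP n σ) ∧ Linked v ∧ (colorsP (v.getLastD [])).card = 1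

/-- the `n`-simplices of `χ^d(Δⁿ)`: linked `d`-tuples of ordered set partitions of `[n]` -/
def IsTopSimplexChi (n d : ℕ) (T : List RawPOSP) : Prop :=
  T.length = d ∧ Linked T ∧
  ∀ σ ∈ T, IsPOSP n σ ∧ carrierP σ = Finset.range (n+1) ∧ ∀ p ∈ σ, p.2 = p.1

def faceAux : Finset ℕ → List RawPOSP → List RawPOSP
  | _, [] => []
  | S, σ :: rest => dl σ S :: faceAux (Dfun S σ) rest

/-- the face of the simplex `T` of `χ^d(Δⁿ)` determined by `S_d = S`:
`(dl(σ_1,S_1),…,dl(σ_d,S_d))` with `S_i = D(σ_{i+1},S_{i+1})`. -/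
def faceT (T : List RawPOSP) (S : Finset ℕ) : List RawPOSP := (faceAux S T.reverse).reverse

/-- the vertex of the `n`-simplex `T` colored `x` -/
def vertexOf (T : List RawPOSP) (x : ℕ) : List RawPOSP :=
  faceT T ((colorsP (T.getLastD [])) \ {x})

/-- relabel all elements by `f` -/
def relabel (f : ℕ → ℕ) (T : List RawPOSP) : List RawPOSP :=
  T.map (fun σ => σ.map (fun p => (p.1.image f, p.2.image f)))

/-- the unique order preserving bijection `I → J` (extended by the identity) -/
noncomputable def oMap (I J : Finset ℕ) (h : I.card = J.card) (x : ℕ) : ℕ :=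
  if hx : x ∈ I then ((J.orderIsoOfFin h.symm) ((I.orderIsoOfFin rfl).symm ⟨x, hx⟩) : ℕ)
  else x

/-- a compliant binary labeling of the vertices of `χ^d(Δⁿ)` -/
def Compliant (n d : ℕ) (lab : List RawPOSP → Bool) : Prop :=
  ∀ I J : Finset ℕ, I ⊆ Finset.range (n+1) → J ⊆ Finset.range (n+1) →
    ∀ h : I.card = J.card, ∀ v : List RawPOSP, IsVertexChi n d v →
      carrierP v.headI ⊆ I → lab (relabel (oMap I J h) v) = lab v

/-- the number of ordered set partitions of `[n] = {0,…,n}` -/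
noncomputable def fOSP (n : ℕ) : ℕ :=
  Nat.card {L : List (Finset ℕ) // IsOSP (Finset.range (n+1)) L}

/-- membership in the vertex set of `Γ_n(V)` -/
def InGammaV (V : Finset ℕ) (L : List (Finset ℕ)) : Prop :=
  ∃ A rest, L = A :: rest ∧ ¬ A ⊆ V

/-- a prefix in `V`: a tuple of nonempty pairwise disjoint subsets of `V` -/
def IsPrefixIn {α : Type*} [DecidableEq α] (V : Finset α) (P : List (Finset α)) : Prop :=
  (∀ A ∈ P, A.Nonempty ∧ A ⊆ V) ∧ P.Pairwise (fun A B => Disjoint A B)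

/-- membership in the vertex set of `Γ_n(V,𝒜)` -/
def InGammaVA (V : Finset ℕ) (P : List (Finset ℕ)) (L : List (Finset ℕ)) : Prop :=
  ∃ A rest, L = P ++ A :: rest ∧ ¬ A ⊆ V

/-- conducting bipartite graph of the first type -/
def ConductingFirst {V : Type*} (G : SimpleGraph V) (A B : Set V) : Prop :=
  A.ncard = B.ncard + 1 ∧
  ∀ v ∈ A, ∃ M : Set (Sym2 V), IsMatchingSet G M ∧ ∀ u, CriticalVx M u ↔ u = v

/-- conducting bipartite graph of the second type -/
def ConductingSecond {V : Type*} (G : SimpleGraph V) (A B : Set V) : Prop :=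
  A.ncard = B.ncard ∧
  ∀ v ∈ A, ∀ w ∈ B, ∃ M : Set (Sym2 V), IsMatchingSet G M ∧
    ∀ u, CriticalVx M u ↔ (u = v ∨ u = w)

/-- the vertex of the `n`-simplex `(As ‖ Bs)` of `χ²(Δⁿ)` colored `x` is internal -/
def InternalVx (n : ℕ) (As Bs : List (Finset ℕ)) (x : ℕ) : Prop :=
  carrierP (dl (toPairs As) (Finset.range (n+1) \ seenBlk Bs x)) = Finset.range (n+1)

/-! The deletion `dl(σ̂, [n] ∖ T)` merges each block of `σ̂` that misses `T` into the next block
meeting `T`, and drops the blocks after the last one meeting `T`. Its carrier is therefore all of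
`[n]` exactly when the last block `A_k` meets `T`. For the vertex colored `x ∈ B_l` one takes
`T = B_1 ∪ … ∪ B_l`, and the remaining claims are bookkeeping with these prefixes of `τ̂`. -/

section lunion

variable {α : Type*} [DecidableEq α]

lemma lunion_cons (A : Finset α) (L : List (Finset α)) : lunion (A :: L) = A ∪ lunion L := rfl

lemma mem_lunion {a : α} {L : List (Finset α)} : a ∈ lunion L ↔ ∃ B ∈ L, a ∈ B := by
  induction L with
  | nil => simp [lunion]
  | cons B L ih => simp [lunion_cons, ih]

lemma subset_lunion {A : Finset α} {L : List (Finset α)} (h : A ∈ L) : A ⊆ lunion L :=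
  fun _ ha => mem_lunion.2 ⟨A, h, ha⟩

lemma lunion_append (L M : List (Finset α)) : lunion (L ++ M) = lunion L ∪ lunion M := by
  ext a; simp only [mem_lunion, List.mem_append, Finset.mem_union]; grind

lemma disjoint_lunion_right {s : Finset α} {L : List (Finset α)} :
    Disjoint s (lunion L) ↔ ∀ B ∈ L, Disjoint s B := by
  simp only [Finset.disjoint_right, mem_lunion]; grind

end lunion

section seenBlk

variable {α : Type*} [DecidableEq α]

lemma subset_seenBlk_cons (B : Finset α) (L : List (Finset α)) (x : α) :
    B ⊆ seenBlk (B :: L) x := by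
  rw [seenBlk]; split <;> simp

lemma seenBlk_cons_of_mem {B : Finset α} {x : α} (hx : x ∈ B) (L : List (Finset α)) :
    seenBlk (B :: L) x = B := if_pos hx

lemma seenBlk_subset_lunion_take {x : α} :
    ∀ {L : List (Finset α)} {q : ℕ}, x ∈ lunion (L.take q) → seenBlk L x ⊆ lunion (L.take q)
  | [], _, _ => by simp [seenBlk]
  | B :: L, 0, hx => by simp [lunion] at hx
  | B :: L, q + 1, hx => by
    rw [List.take_succ_cons, lunion_cons] at hx ⊢
    by_cases hxB : x ∈ B
    · rw [seenBlk_cons_of_mem hxB]; exact Finset.subset_union_left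
    · rw [seenBlk, if_neg hxB]
      exact Finset.union_subset_union_right
        (seenBlk_subset_lunion_take ((Finset.mem_union.1 hx).resolve_left hxB))

lemma getElem_subset_seenBlk {x : α} :
    ∀ {L : List (Finset α)} {q : ℕ} (hq : q < L.length),
      x ∉ lunion (L.take q) → x ∈ lunion L → L[q] ⊆ seenBlk L x
  | B :: L, 0, _, _, _ => subset_seenBlk_cons B L x
  | B :: L, q + 1, hq, hxq, hx => by
    rw [List.take_succ_cons, lunion_cons, Finset.mem_union, not_or] at hxq
    rw [lunion_cons, Finset.mem_union] at hx
    rw [seenBlk, if_neg hxq.1]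
    exact (getElem_subset_seenBlk (Nat.lt_of_succ_lt_succ hq) hxq.2
      (hx.resolve_left hxq.1)).trans Finset.subset_union_right

end seenBlk

section dl

lemma carrierP_cons (p : Finset ℕ × Finset ℕ) (σ : RawPOSP) :
    carrierP (p :: σ) = p.1 ∪ carrierP σ := rfl

lemma carrierP_toPairs (L : List (Finset ℕ)) : carrierP (toPairs L) = lunion L := by
  simp [carrierP, toPairs, lunion, Function.comp_def]

variable (S : Finset ℕ) {A B : Finset ℕ}

lemma carrierP_dlAux_append_of_not_subset (hB : ¬ B ⊆ S) :
    ∀ (σ : RawPOSP) (acc : Finset ℕ),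
      carrierP (dlAux S acc (σ ++ [(A, B)])) = acc ∪ carrierP (σ ++ [(A, B)])
  | [], acc => by simp [dlAux, hB, carrierP]
  | (A', B') :: σ, acc => by
    rw [List.cons_append, dlAux]
    split
    · rw [carrierP_dlAux_append_of_not_subset hB σ, carrierP_cons, Finset.union_assoc]
    · rw [carrierP_cons, carrierP_dlAux_append_of_not_subset hB σ, carrierP_cons,
        Finset.empty_union, Finset.union_assoc]

lemma carrierP_dlAux_append_subset (hB : B ⊆ S) :
    ∀ (σ : RawPOSP) (acc : Finset ℕ),
      carrierP (dlAux S acc (σ ++ [(A, B)])) ⊆ acc ∪ carrierP σ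
  | [], acc => by simp [dlAux, hB, carrierP]
  | (A', B') :: σ, acc => by
    rw [List.cons_append, dlAux, carrierP_cons, ← Finset.union_assoc]
    split
    · exact carrierP_dlAux_append_subset hB σ _
    · rw [carrierP_cons]
      exact Finset.union_subset_union_right (by simpa using carrierP_dlAux_append_subset hB σ ∅)

end dl

theorem carrierP_dl_toPairs_eq_iff {U T Ak : Finset ℕ} {As : List (Finset ℕ)}
    (h : IsOSP U (As ++ [Ak])) :
    carrierP (dl (toPairs (As ++ [Ak])) (U \ T)) = U ↔ (Ak ∩ T).Nonempty := by
  obtain ⟨hne, hdisj, hU⟩ := h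
  rw [lunion_append] at hU
  have hAkU : Ak ⊆ U := by
    rw [← hU]; exact fun a ha => Finset.mem_union_right _ (by simpa [lunion] using ha)
  have hsplit : toPairs (As ++ [Ak]) = toPairs As ++ [(Ak, Ak)] := List.map_append ..
  rw [dl, hsplit]
  by_cases hAkS : Ak ⊆ U \ T
  · have hAkT : Ak ∩ T = ∅ := by
      ext a; simp only [Finset.mem_inter, Finset.notMem_empty, iff_false, not_and]
      exact fun ha => (Finset.mem_sdiff.1 (hAkS ha)).2
    have hdisjAk : Disjoint Ak (lunion As) := disjoint_lunion_right.2 fun B hB =>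
      (List.pairwise_append.1 hdisj).2.2 B hB Ak (by simp) |>.symm
    obtain ⟨a, ha⟩ := hne Ak (by simp)
    simp only [hAkT, Finset.not_nonempty_empty, iff_false]
    intro hcar
    have := carrierP_dlAux_append_subset (U \ T) (A := Ak) hAkS (toPairs As) ∅
    rw [hcar, Finset.empty_union, carrierP_toPairs] at this
    exact Finset.disjoint_left.1 hdisjAk ha (this (hAkU ha))
  · rw [carrierP_dlAux_append_of_not_subset _ hAkS, Finset.empty_union, ← hsplit,
      carrierP_toPairs, lunion_append, hU]
    obtain ⟨a, haAk, haS⟩ := Finset.not_subset.1 hAkS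
    simp only [true_iff]
    exact ⟨a, Finset.mem_inter.2 ⟨haAk, by simpa [hAkU haAk] using haS⟩⟩

lemma internalVx_iff {n : ℕ} {As : List (Finset ℕ)} (hA : IsOSP (Finset.range (n + 1)) As)
    (Bs : List (Finset ℕ)) (x : ℕ) :
    InternalVx n As Bs x ↔ ((As.getLastD ∅) ∩ seenBlk Bs x).Nonempty := by
  rcases List.eq_nil_or_concat' As with rfl | ⟨As', Ak, rfl⟩
  · exact absurd hA.2.2.symm (by simp [lunion])
  · rw [InternalVx, carrierP_dl_toPairs_eq_iff hA, List.getLastD_concat]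

/-- Characterization of the internal vertices of an `n`-simplex `(As ‖ Bs)` of `χ²(Δⁿ)`:
the vertex colored `x ∈ B_l` is internal iff `A_k ∩ (B_1∪…∪B_l) ≠ ∅`; all vertices are
internal iff `A_k ∩ B_1 ≠ ∅`; and if `q` is the largest index with `A_k ∩ B_i = ∅` for
all `i ≤ q`, the boundary vertices are exactly those colored by `B_1∪…∪B_q`. -/
theorem statement14 (n : ℕ) (As Bs : List (Finset ℕ))
    (hA : IsOSP (Finset.range (n + 1)) As) (hB : IsOSP (Finset.range (n + 1)) Bs) :
    (∀ x ∈ Finset.range (n + 1),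
      InternalVx n As Bs x ↔ ((As.getLastD ∅) ∩ seenBlk Bs x).Nonempty) ∧
    ((∀ x ∈ Finset.range (n + 1), InternalVx n As Bs x) ↔
      ((As.getLastD ∅) ∩ Bs.headI).Nonempty) ∧
    (∀ q : ℕ, 1 ≤ q → q ≤ Bs.length →
      (∀ B ∈ Bs.take q, Disjoint (As.getLastD ∅) B) →
      (∀ h : q < Bs.length, ¬ Disjoint (As.getLastD ∅) (Bs.get ⟨q, h⟩)) →
      ∀ x ∈ Finset.range (n + 1),
        (¬ InternalVx n As Bs x ↔ x ∈ lunion (Bs.take q))) := by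
  obtain ⟨hBne, -, hBU⟩ := hB
  refine ⟨fun x _ => internalVx_iff hA Bs x, ?_, ?_⟩
  · obtain ⟨B₁, Bs', rfl⟩ : ∃ B₁ Bs', Bs = B₁ :: Bs' := by
      cases Bs with
      | nil => exact absurd hBU.symm (by simp [lunion])
      | cons B₁ Bs' => exact ⟨B₁, Bs', rfl⟩
    simp only [internalVx_iff hA, List.headI_cons]
    refine ⟨fun hall => ?_, fun ⟨a, ha⟩ x _ => ⟨a, Finset.inter_subset_inter_left
      (subset_seenBlk_cons B₁ Bs' x) ha⟩⟩
    obtain ⟨x, hx⟩ := hBne B₁ (by simp)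
    simpa [seenBlk_cons_of_mem hx] using
      hall x (hBU ▸ subset_lunion (by simp) hx)
  · intro q _ hq hdisj hnext x hx
    rw [internalVx_iff hA, Finset.not_nonempty_iff_eq_empty, ← Finset.disjoint_iff_inter_eq_empty]
    refine ⟨fun hxdisj => ?_, fun hxq => (disjoint_lunion_right.2 hdisj).mono_right
      (seenBlk_subset_lunion_take hxq)⟩
    rcases hq.lt_or_eq with hq | rfl
    · by_contra hxq
      exact hnext hq (hxdisj.mono_right (getElem_subset_seenBlk hq hxq (hBU ▸ hx)))
    · rwa [List.take_length, hBU]
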